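/- Let A = (a_ij) be an n×n matrix with nonnegative real entries whose tropical spectral radius λ = λ(A) is positive. Then the infimum over all positive vectors x ∈ ℝⁿ of the quantity x⁻⊗A⊗x = max_{i,j} a_ij·x_j/x_i equals λ, and the infimum is attained. -/

import Mathlib

/-- Max-times matrix product: `(A ⊗ B)_ik = max_j a_ij · b_jk`. -/
noncomputable def tMul {n : ℕ} (A B : Matrix (Fin n) (Fin n) ℝ) : Matrix (Fin n) (Fin n) ℝ :=
  fun i k => ⨆ j, A i j * B j k

/-- Max-times matrix powers, with `A^⊗0 = I`. -/
noncomputable def tPow {n : ℕ} (A : Matrix (Fin n) (Fin n) ℝ) : ℕ → Matrix (Fin n) (Fin n) ℝ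
  | 0 => fun i j => if i = j then 1 else 0
  | (k + 1) => tMul A (tPow A k)

/-- Tropical trace: `tr A = max_i a_ii`. -/
noncomputable def tTr {n : ℕ} (A : Matrix (Fin n) (Fin n) ℝ) : ℝ :=
  ⨆ i, A i i

/-- Tropical spectral radius: `λ(A) = max_{1 ≤ k ≤ n} (tr (A^⊗k))^(1/k)`. -/
noncomputable def tRadius {n : ℕ} (A : Matrix (Fin n) (Fin n) ℝ) : ℝ :=
  ⨆ k : Fin n, (tTr (tPow A ((k : ℕ) + 1))) ^ ((1 : ℝ) / ((k : ℕ) + 1))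


/-!
If `A ⊗ x ≤ v · x` for a positive vector `x`, then `A^⊗k ⊗ x ≤ v^k · x`, so the diagonal of
`A^⊗k` is bounded by `v^k` and `λ(A) ≤ v`. Conversely, for `B = λ⁻¹ · A` every cycle of length at
most `n` has weight at most `1`. A maximal walk of length `n` repeats a vertex, and cutting out
the cycle loses no weight, so `B^⊗n ≤ I ⊕ B ⊕ ⋯ ⊕ B^⊗(n-1)`. Hence the row maxima `x` of this
Kleene star satisfy `B ⊗ x ≤ x`, that is `x⁻ ⊗ A ⊗ x ≤ λ`.
-/

variable {n : ℕ}

lemma tPow_zero_apply (A : Matrix (Fin n) (Fin n) ℝ) (i j : Fin n) :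
    tPow A 0 i j = if i = j then 1 else 0 := rfl

lemma tPow_succ_apply (A : Matrix (Fin n) (Fin n) ℝ) (m : ℕ) (i j : Fin n) :
    tPow A (m + 1) i j = ⨆ k, A i k * tPow A m k j := rfl

lemma tPow_nonneg {A : Matrix (Fin n) (Fin n) ℝ} (hA : ∀ i j, 0 ≤ A i j) (m : ℕ)
    (i j : Fin n) : 0 ≤ tPow A m i j := by
  induction m generalizing i with
  | zero => rw [tPow_zero_apply]; split_ifs <;> norm_num
  | succ m ih => exact Real.iSup_nonneg fun k => mul_nonneg (hA i k) (ih k)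

lemma mul_tPow_le_tPow_add {A : Matrix (Fin n) (Fin n) ℝ} (hA : ∀ i j, 0 ≤ A i j) (a b : ℕ)
    (i k j : Fin n) :
    tPow A a i k * tPow A b k j ≤ tPow A (a + b) i j := by
  induction a generalizing i with
  | zero =>
    rw [tPow_zero_apply, zero_add]
    split_ifs with hik
    · rw [hik, one_mul]
    · rw [zero_mul]; exact tPow_nonneg hA b i j
  | succ a ih =>
    rw [tPow_succ_apply, Real.iSup_mul_of_nonneg (tPow_nonneg hA b k j),
      Nat.add_right_comm, tPow_succ_apply]
    refine ciSup_mono (Finite.bddAbove_range _) fun l => ?_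
    rw [mul_assoc]
    exact mul_le_mul_of_nonneg_left (ih l) (hA i l)

lemma tRadius_le_iff {A : Matrix (Fin n) (Fin n) ℝ} (hA : ∀ i j, 0 ≤ A i j) {v : ℝ}
    (hv : 0 ≤ v) :
    tRadius A ≤ v ↔ ∀ m, 0 < m → m ≤ n → tTr (tPow A m) ≤ v ^ m := by
  have htr : ∀ m, 0 ≤ tTr (tPow A m) := fun m =>
    Real.iSup_nonneg fun i => tPow_nonneg hA m i i
  have hroot : ∀ k : ℕ, (tTr (tPow A (k + 1))) ^ ((1 : ℝ) / (k + 1)) ≤ v ↔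
      tTr (tPow A (k + 1)) ≤ v ^ (k + 1) := fun k => by
    rw [one_div, Real.rpow_inv_le_iff_of_pos (htr _) hv (by positivity), ← Nat.cast_succ,
      Real.rpow_natCast]
  rw [tRadius]
  constructor
  · intro h m hm hmn
    obtain ⟨k, rfl⟩ := Nat.exists_eq_add_of_lt hm
    rw [zero_add] at hmn ⊢
    exact (hroot k).mp <| (le_ciSup (Finite.bddAbove_range _) (⟨k, hmn⟩ : Fin n)).trans h
  · intro h
    exact Real.iSup_le (fun k => (hroot k).mpr (h _ k.val.succ_pos k.isLt)) hv

lemma tPow_smul {c : ℝ} (hc : 0 ≤ c) (A : Matrix (Fin n) (Fin n) ℝ) (m : ℕ) :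
    tPow (c • A) m = c ^ m • tPow A m := by
  induction m with
  | zero => ext i j; simp [tPow_zero_apply]
  | succ m ih =>
    ext i j
    simp only [tPow_succ_apply, ih, Matrix.smul_apply, smul_eq_mul,
      Real.mul_iSup_of_nonneg (pow_nonneg hc _)]
    congr 1; ext k; ring

lemma tTr_smul {c : ℝ} (hc : 0 ≤ c) (A : Matrix (Fin n) (Fin n) ℝ) :
    tTr (c • A) = c * tTr A := by
  simp only [tTr, Matrix.smul_apply, smul_eq_mul, Real.mul_iSup_of_nonneg hc]

noncomputable def walkWeight (A : Matrix (Fin n) (Fin n) ℝ) (p : ℕ → Fin n) (m : ℕ) : ℝ :=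
  ∏ t ∈ Finset.range m, A (p t) (p (t + 1))

lemma walkWeight_nonneg {A : Matrix (Fin n) (Fin n) ℝ} (hA : ∀ i j, 0 ≤ A i j)
    (p : ℕ → Fin n) (m : ℕ) : 0 ≤ walkWeight A p m :=
  Finset.prod_nonneg fun _ _ => hA _ _

lemma walkWeight_succ (A : Matrix (Fin n) (Fin n) ℝ) (p : ℕ → Fin n) (m : ℕ) :
    walkWeight A p (m + 1) = A (p 0) (p 1) * walkWeight A (fun t => p (t + 1)) m := by
  rw [walkWeight, Finset.prod_range_succ', mul_comm]
  rfl

lemma walkWeight_add (A : Matrix (Fin n) (Fin n) ℝ) (p : ℕ → Fin n) (a b : ℕ) :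
    walkWeight A p (a + b) = walkWeight A p a * walkWeight A (fun t => p (a + t)) b := by
  simp only [walkWeight, Finset.prod_range_add, add_assoc]

lemma walkWeight_le_tPow {A : Matrix (Fin n) (Fin n) ℝ} (hA : ∀ i j, 0 ≤ A i j)
    (p : ℕ → Fin n) (m : ℕ) : walkWeight A p m ≤ tPow A m (p 0) (p m) := by
  induction m generalizing p with
  | zero => simp [walkWeight, tPow_zero_apply]
  | succ m ih =>
    rw [walkWeight_succ, tPow_succ_apply]
    calc A (p 0) (p 1) * walkWeight A (fun t => p (t + 1)) m
        ≤ A (p 0) (p 1) * tPow A m (p 1) (p (m + 1)) :=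
          mul_le_mul_of_nonneg_left (ih _) (hA _ _)
      _ ≤ ⨆ k, A (p 0) k * tPow A m k (p (m + 1)) :=
          le_ciSup (f := fun k => A (p 0) k * tPow A m k (p (m + 1))) (Finite.bddAbove_range _) _

lemma exists_walkWeight_eq_tPow (A : Matrix (Fin n) (Fin n) ℝ) {m : ℕ} {i j : Fin n}
    (h : tPow A m i j ≠ 0) :
    ∃ p : ℕ → Fin n, p 0 = i ∧ p m = j ∧ walkWeight A p m = tPow A m i j := by
  induction m generalizing i with
  | zero =>
    have hij : i = j := by by_contra hij; simp [tPow_zero_apply, hij] at h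
    exact ⟨fun _ => i, rfl, hij, by simp [walkWeight, tPow_zero_apply, hij]⟩
  | succ m ih =>
    have : Nonempty (Fin n) := ⟨i⟩
    obtain ⟨k, hk⟩ := exists_eq_ciSup_of_finite (f := fun k => A i k * tPow A m k j)
    rw [tPow_succ_apply, ← hk] at h ⊢
    obtain ⟨p, rfl, hpm, hp⟩ := ih (right_ne_zero_of_mul h)
    refine ⟨fun t => Nat.casesOn t i p, rfl, hpm, ?_⟩
    rw [walkWeight_succ, ← hp]
    rfl

lemma exists_lt_tPow_le_of_tTr_le_one {A : Matrix (Fin n) (Fin n) ℝ} (hA : ∀ i j, 0 ≤ A i j)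
    (hcyc : ∀ m, 0 < m → m ≤ n → tTr (tPow A m) ≤ 1) (i j : Fin n) :
    ∃ k < n, tPow A n i j ≤ tPow A k i j := by
  by_cases h0 : tPow A n i j = 0
  · exact ⟨0, i.pos, h0 ▸ tPow_nonneg hA 0 i j⟩
  obtain ⟨p, rfl, rfl, hp⟩ := exists_walkWeight_eq_tPow A h0
  obtain ⟨s, t, hst, hpst⟩ :=
    Fintype.exists_ne_map_eq_of_card_lt (fun u : Fin (n + 1) => p u) (by simp)
  obtain ⟨a, b, hab, hbn, hpab⟩ : ∃ a b, a < b ∧ b ≤ n ∧ p a = p b := by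
    rcases Fin.lt_or_lt_of_ne hst with h | h
    · exact ⟨s, t, h, t.is_le, hpst⟩
    · exact ⟨t, s, h, s.is_le, hpst.symm⟩
  obtain ⟨c, rfl⟩ := Nat.exists_eq_add_of_le hab.le
  obtain ⟨d, hd⟩ := Nat.exists_eq_add_of_le hbn
  refine ⟨a + d, by omega, ?_⟩
  have hcycle : walkWeight A (fun t => p (a + t)) c ≤ 1 := by
    have h := walkWeight_le_tPow hA (fun t => p (a + t)) c
    simp only [add_zero, ← hpab] at h
    exact h.trans <| (le_ciSup (f := fun i => tPow A c i i) (Finite.bddAbove_range _) _).trans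
      (hcyc c (by omega) (by omega))
  have hhead := walkWeight_le_tPow hA p a
  have htail := walkWeight_le_tPow hA (fun t => p (a + c + t)) d
  simp only [add_zero, ← hpab, ← hd] at htail
  calc tPow A n (p 0) (p n)
      = walkWeight A p a * walkWeight A (fun t => p (a + t)) c *
          walkWeight A (fun t => p (a + c + t)) d := by
        rw [← hp, congrArg (walkWeight A p) hd, walkWeight_add, walkWeight_add]
    _ ≤ tPow A a (p 0) (p a) * 1 * tPow A d (p a) (p n) :=
        mul_le_mul (mul_le_mul hhead hcycle (walkWeight_nonneg hA _ _) (tPow_nonneg hA _ _ _))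
          htail (walkWeight_nonneg hA _ _) (by simpa using tPow_nonneg hA _ _ _)
    _ ≤ tPow A (a + d) (p 0) (p n) := by
        rw [mul_one]; exact mul_tPow_le_tPow_add hA a d _ _ _

lemma exists_pos_mul_le_of_tTr_le_one {A : Matrix (Fin n) (Fin n) ℝ} (hA : ∀ i j, 0 ≤ A i j)
    (hcyc : ∀ m, 0 < m → m ≤ n → tTr (tPow A m) ≤ 1) :
    ∃ x : Fin n → ℝ, (∀ i, 0 < x i) ∧ ∀ i j, A i j * x j ≤ x i := by
  set x : Fin n → ℝ := fun i => ⨆ k : Fin n, ⨆ l, tPow A k i l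
  have hle : ∀ k < n, ∀ i l, tPow A k i l ≤ x i := fun k hk i l =>
    (le_ciSup (f := fun l => tPow A k i l) (Finite.bddAbove_range _) l).trans
      (le_ciSup (f := fun k : Fin n => ⨆ l, tPow A k i l) (Finite.bddAbove_range _) ⟨k, hk⟩)
  have hpos : ∀ i, 0 < x i := fun i =>
    one_pos.trans_le <| by simpa [tPow_zero_apply] using hle 0 i.pos i i
  refine ⟨x, hpos, fun i j => ?_⟩
  simp only [x, Real.mul_iSup_of_nonneg (hA i j)]
  refine Real.iSup_le (fun k => Real.iSup_le (fun l => ?_) (hpos i).le) (hpos i).le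
  have hstep : A i j * tPow A k j l ≤ tPow A (k + 1) i l :=
    le_ciSup (f := fun m => A i m * tPow A k m l) (Finite.bddAbove_range _) j
  rcases Nat.lt_or_eq_of_le (show (k : ℕ) + 1 ≤ n from k.isLt) with hk | hk
  · exact hstep.trans (hle _ hk i l)
  · obtain ⟨k', hk', hshort⟩ := exists_lt_tPow_le_of_tTr_le_one hA hcyc i l
    rw [hk] at hstep
    exact hstep.trans (hshort.trans (hle k' hk' i l))

lemma exists_pos_mul_le_tRadius_mul {A : Matrix (Fin n) (Fin n) ℝ} (hA : ∀ i j, 0 ≤ A i j)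
    (hpos : 0 < tRadius A) :
    ∃ x : Fin n → ℝ, (∀ i, 0 < x i) ∧ ∀ i j, A i j * x j ≤ tRadius A * x i := by
  have hB : ∀ i j, 0 ≤ ((tRadius A)⁻¹ • A) i j := fun i j =>
    mul_nonneg (inv_nonneg.mpr hpos.le) (hA i j)
  have hcyc : ∀ m, 0 < m → m ≤ n → tTr (tPow ((tRadius A)⁻¹ • A) m) ≤ 1 := by
    intro m hm hmn
    rw [tPow_smul (inv_nonneg.mpr hpos.le), tTr_smul (by positivity), inv_pow,
      inv_mul_le_one₀ (by positivity)]
    exact (tRadius_le_iff hA hpos.le).mp le_rfl m hm hmn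
  obtain ⟨x, hx, hBx⟩ := exists_pos_mul_le_of_tTr_le_one hB hcyc
  refine ⟨x, hx, fun i j => ?_⟩
  have := hBx i j
  rwa [Matrix.smul_apply, smul_eq_mul, mul_assoc, inv_mul_le_iff₀ hpos] at this

lemma tRadius_le_of_mul_le {A : Matrix (Fin n) (Fin n) ℝ} (hA : ∀ i j, 0 ≤ A i j)
    {x : Fin n → ℝ} (hx : ∀ i, 0 < x i) {v : ℝ} (hv : 0 ≤ v)
    (hAx : ∀ i j, A i j * x j ≤ v * x i) : tRadius A ≤ v := by
  have hpow : ∀ m i j, tPow A m i j * x j ≤ v ^ m * x i := by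
    intro m
    induction m with
    | zero =>
      intro i j
      rw [tPow_zero_apply]
      split_ifs with hij
      · rw [hij, one_mul, pow_zero, one_mul]
      · rw [zero_mul, pow_zero, one_mul]; exact (hx i).le
    | succ m ih =>
      intro i j
      rw [tPow_succ_apply, Real.iSup_mul_of_nonneg (hx j).le]
      refine Real.iSup_le (fun k => ?_) (mul_nonneg (pow_nonneg hv _) (hx i).le)
      calc A i k * tPow A m k j * x j ≤ A i k * (v ^ m * x k) := by
            rw [mul_assoc]; exact mul_le_mul_of_nonneg_left (ih k j) (hA i k)
        _ = v ^ m * (A i k * x k) := by ring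
        _ ≤ v ^ m * (v * x i) := mul_le_mul_of_nonneg_left (hAx i k) (pow_nonneg hv m)
        _ = v ^ (m + 1) * x i := by ring
  refine (tRadius_le_iff hA hv).mpr fun m _ _ => ?_
  exact Real.iSup_le (fun i => le_of_mul_le_mul_right (hpow m i i) (hx i)) (pow_nonneg hv m)

lemma iSup_iSup_mul_div_le_iff {A : Matrix (Fin n) (Fin n) ℝ} {x : Fin n → ℝ}
    (hx : ∀ i, 0 < x i) {v : ℝ} (hv : 0 ≤ v) :
    (⨆ i, ⨆ j, A i j * x j / x i) ≤ v ↔ ∀ i j, A i j * x j ≤ v * x i := by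
  constructor
  · intro h i j
    rw [← div_le_iff₀ (hx i)]
    exact (le_ciSup (f := fun j => A i j * x j / x i) (Finite.bddAbove_range _) j).trans <|
      (le_ciSup (f := fun i => ⨆ j, A i j * x j / x i) (Finite.bddAbove_range _) i).trans h
  · intro h
    exact Real.iSup_le (fun i => Real.iSup_le (fun j => (div_le_iff₀ (hx i)).mpr (h i j)) hv) hv

lemma tRadius_le_iSup_iSup_mul_div {A : Matrix (Fin n) (Fin n) ℝ} (hA : ∀ i j, 0 ≤ A i j)
    {x : Fin n → ℝ} (hx : ∀ i, 0 < x i) : tRadius A ≤ ⨆ i, ⨆ j, A i j * x j / x i := by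
  have hv : 0 ≤ ⨆ i, ⨆ j, A i j * x j / x i := Real.iSup_nonneg fun i =>
    Real.iSup_nonneg fun j => div_nonneg (mul_nonneg (hA i j) (hx j).le) (hx i).le
  exact tRadius_le_of_mul_le hA hx hv ((iSup_iSup_mul_div_le_iff hx hv).mp le_rfl)

theorem min_xAx_eq_tRadius_general (n : ℕ)
    (A : Matrix (Fin n) (Fin n) ℝ) (hA : ∀ i j, 0 ≤ A i j)
    (hpos : 0 < tRadius A) :
    IsLeast {v : ℝ | ∃ x : Fin n → ℝ, (∀ i, 0 < x i) ∧
        v = ⨆ i, ⨆ j, A i j * x j / x i}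
      (tRadius A) := by
  refine ⟨?_, fun v ⟨x, hx, hv⟩ => hv ▸ tRadius_le_iSup_iSup_mul_div hA hx⟩
  obtain ⟨x, hx, hAx⟩ := exists_pos_mul_le_tRadius_mul hA hpos
  exact ⟨x, hx, le_antisymm (tRadius_le_iSup_iSup_mul_div hA hx)
    ((iSup_iSup_mul_div_le_iff hx hpos.le).mpr hAx)⟩

/-- For a nonnegative matrix `A` with positive tropical spectral radius
`λ = λ(A)`, the infimum over positive vectors `x` of
`x⁻ ⊗ A ⊗ x = max_{i,j} a_ij · x_j / x_i` equals `λ` and is attained. -/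
theorem min_xAx_eq_tRadius (n : ℕ) (hn : 1 ≤ n)
    (A : Matrix (Fin n) (Fin n) ℝ) (hA : ∀ i j, 0 ≤ A i j)
    (hpos : 0 < tRadius A) :
    IsLeast {v : ℝ | ∃ x : Fin n → ℝ, (∀ i, 0 < x i) ∧
        v = ⨆ i, ⨆ j, A i j * x j / x i}
      (tRadius A) :=
  min_xAx_eq_tRadius_general n A hA hpos
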